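/- arXiv:1806.10959 — 2 statements merged into one kernel-verified Lean document; each statement's English description precedes it below -/
import Mathlib

section
/- Fix integers r ≥ 2, 1 ≤ k ≤ r, and a real α > −1, and suppose the equation r · C(r−1,k−1) · y^{k−1}(1−y)^{r−k} = 2+α has exactly two solutions z₁ < z₂ in (0,1). Then for every x ∈ [0,1], the function y ↦ F₁(y; x, k, r) is strictly decreasing on [0, z₁] and on [z₂, 1] and strictly increasing on [z₁, z₂]; consequently F₁(·; x, k, r) has at most three zeros in [0,1]. -/
/-!
Differentiating term by term, the tail sums of Bernstein polynomials telescope, so `g' = dg` and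
`F₁' = dg - (2 + α)`. Now `dg` is a positive multiple of `y ^ (k - 1) * (1 - y) ^ (r - k)`, which
increases strictly up to its mode `(k - 1) / (r - 1)` and decreases strictly after it. Hence the
two solutions `z₁ < z₂` of `dg = 2 + α` straddle the mode, `dg < 2 + α` off `[z₁, z₂]` and
`dg > 2 + α` inside, which is the monotonicity pattern of `F₁`. Being injective on each of three
consecutive intervals, `F₁` has at most three zeros in `[0, 1]`.
-/

open Finset

/-- `g(y; k, r) = ∑_{i=k}^{r} C(r,i) y^i (1−y)^{r−i}`. -/
noncomputable def g (r k : ℕ) (y : ℝ) : ℝ :=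
  ∑ i ∈ Finset.Icc k r, (r.choose i : ℝ) * y ^ i * (1 - y) ^ (r - i)

/-- `F₁(y; x, k, r) = g(y; k, r) − (2+α)y + x(1+α)`. -/
noncomputable def F1 (r k : ℕ) (α x y : ℝ) : ℝ :=
  g r k y - (2 + α) * y + x * (1 + α)

/-- `dg(y; k, r) = r · C(r−1, k−1) · y^{k−1} (1−y)^{r−k}`. -/
noncomputable def dg (r k : ℕ) (y : ℝ) : ℝ :=
  (r : ℝ) * ((r - 1).choose (k - 1) : ℝ) * y ^ (k - 1) * (1 - y) ^ (r - k)

theorem Polynomial.derivative_sum_bernsteinPolynomial_Icc (R : Type*) [CommRing R] {n j : ℕ}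
    (hj : j < n) :
    derivative (∑ i ∈ Icc (j + 1) n, bernsteinPolynomial R n i) =
      n * bernsteinPolynomial R (n - 1) j := by
  rw [← Finset.Ico_add_one_right_eq_Icc, sum_Ico_eq_sum_range, derivative_sum]
  have hlen : n + 1 - (j + 1) = n - j := by omega
  simp_rw [hlen, add_right_comm j 1, bernsteinPolynomial.derivative_succ, ← mul_sum,
    add_assoc j _ 1]
  rw [sum_range_sub' (fun t => bernsteinPolynomial R (n - 1) (j + t)), Nat.add_sub_cancel' hj.le,
    bernsteinPolynomial.eq_zero_of_lt R (Nat.sub_lt (by omega) one_pos), add_zero, sub_zero]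

theorem hasDerivAt_g {r k : ℕ} (hk1 : 1 ≤ k) (hkr : k ≤ r) (y : ℝ) :
    HasDerivAt (g r k) (dg r k y) y := by
  obtain ⟨j, rfl⟩ : ∃ j, k = j + 1 := ⟨k - 1, by omega⟩
  have hg : g r (j + 1) = fun y => (∑ i ∈ Icc (j + 1) r, bernsteinPolynomial ℝ r i).eval y := by
    funext z
    simp [g, Polynomial.eval_finsetSum, bernsteinPolynomial]
  have h := (∑ i ∈ Icc (j + 1) r, bernsteinPolynomial ℝ r i).hasDerivAt y
  rw [Polynomial.derivative_sum_bernsteinPolynomial_Icc ℝ (by omega)] at h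
  rw [hg]
  refine h.congr_deriv ?_
  simp only [dg, bernsteinPolynomial, Polynomial.eval_mul, Polynomial.eval_natCast,
    Polynomial.eval_pow, Polynomial.eval_X, Polynomial.eval_sub, Polynomial.eval_one,
    add_tsub_cancel_right]
  rw [show r - 1 - j = r - (j + 1) by omega]
  ring

theorem hasDerivAt_pow_mul_one_sub_pow (a b : ℕ) {y : ℝ} (hy₀ : 0 < y) (hy₁ : y < 1) :
    HasDerivAt (fun y : ℝ => y ^ a * (1 - y) ^ b)
      (y ^ a * (1 - y) ^ b * (a - (a + b) * y) / (y * (1 - y))) y := by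
  have hpow : ∀ (n : ℕ) (t : ℝ), (n : ℝ) * t ^ (n - 1) * t = n * t ^ n := by
    rintro (_ | n) t
    · simp
    · simp [pow_succ, mul_assoc]
  have hdiff := (hasDerivAt_pow a y).mul ((hasDerivAt_pow b (1 - y)).comp y
    ((hasDerivAt_id y).const_sub 1))
  simp only [Function.comp_def] at hdiff
  refine hdiff.congr_deriv ?_
  have hy₁' : 0 < 1 - y := by linarith
  field_simp
  linear_combination (1 - y) ^ b * (1 - y) * hpow a y - y ^ a * y * hpow b (1 - y)

theorem strictMonoOn_pow_mul_one_sub_pow (a b : ℕ) :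
    StrictMonoOn (fun y : ℝ => y ^ a * (1 - y) ^ b) (Set.Icc 0 (a / (a + b))) := by
  refine strictMonoOn_of_deriv_pos (convex_Icc _ _) (by fun_prop) fun y hy => ?_
  rw [interior_Icc] at hy
  obtain ⟨hy₀, hym⟩ := hy
  have hab : (0 : ℝ) < a + b := by
    rcases (by positivity : (0 : ℝ) ≤ a + b).eq_or_lt with h | h
    · rw [← h, div_zero] at hym; linarith
    · exact h
  have hy₁ : y < 1 := hym.trans_le (div_le_one_of_le₀ (by simp) hab.le)
  rw [(hasDerivAt_pow_mul_one_sub_pow a b hy₀ hy₁).deriv]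
  have : (a + b) * y < a := by rwa [lt_div_iff₀ hab, mul_comm] at hym
  have : 0 < 1 - y := by linarith
  exact div_pos (mul_pos (by positivity) (by linarith)) (by positivity)

theorem strictAntiOn_pow_mul_one_sub_pow {a b : ℕ} (hab : 0 < a + b) :
    StrictAntiOn (fun y : ℝ => y ^ a * (1 - y) ^ b) (Set.Icc (a / (a + b)) 1) := by
  refine strictAntiOn_of_deriv_neg (convex_Icc _ _) (by fun_prop) fun y hy => ?_
  rw [interior_Icc] at hy
  obtain ⟨hym, hy₁⟩ := hy
  have hab' : (0 : ℝ) < a + b := by exact_mod_cast hab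
  have hy₀ : 0 < y := lt_of_le_of_lt (by positivity) hym
  rw [(hasDerivAt_pow_mul_one_sub_pow a b hy₀ hy₁).deriv]
  have : a < (a + b) * y := by rwa [div_lt_iff₀ hab', mul_comm] at hym
  have : 0 < 1 - y := by linarith
  exact div_neg_of_neg_of_pos (mul_neg_of_pos_of_neg (by positivity) (by linarith))
    (by positivity)

theorem dg_eq (r k : ℕ) :
    dg r k = fun y => ((r : ℝ) * (r - 1).choose (k - 1)) * (y ^ (k - 1) * (1 - y) ^ (r - k)) := by
  ext y
  simp only [dg, mul_assoc]

theorem dg_coeff_pos {r k : ℕ} (hk1 : 1 ≤ k) (hkr : k ≤ r) :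
    (0 : ℝ) < r * (r - 1).choose (k - 1) := by
  have := Nat.choose_pos (Nat.sub_le_sub_right hkr 1)
  have : 0 < r := by omega
  positivity

noncomputable def dgMode (r k : ℕ) : ℝ := ((k - 1 : ℕ) : ℝ) / ((k - 1 : ℕ) + (r - k : ℕ))

theorem strictMonoOn_dg {r k : ℕ} (hk1 : 1 ≤ k) (hkr : k ≤ r) :
    StrictMonoOn (dg r k) (Set.Icc 0 (dgMode r k)) := by
  rw [dg_eq]
  exact (strictMono_mul_left_of_pos (dg_coeff_pos hk1 hkr)).comp_strictMonoOn
    (strictMonoOn_pow_mul_one_sub_pow _ _)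

theorem strictAntiOn_dg {r k : ℕ} (hr : 2 ≤ r) (hk1 : 1 ≤ k) (hkr : k ≤ r) :
    StrictAntiOn (dg r k) (Set.Icc (dgMode r k) 1) := by
  rw [dg_eq]
  exact (strictMono_mul_left_of_pos (dg_coeff_pos hk1 hkr)).comp_strictAntiOn
    (strictAntiOn_pow_mul_one_sub_pow (by omega))

section Unimodal

variable {α β : Type*} [LinearOrder α] [LinearOrder β] {f : α → β} {a b m z₁ z₂ : α}

theorem mem_Ioo_of_strictMonoOn_of_strictAntiOn (hinc : StrictMonoOn f (Set.Icc a m))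
    (hdec : StrictAntiOn f (Set.Icc m b)) (hz : z₁ < z₂) (h₁ : z₁ ∈ Set.Icc a b)
    (h₂ : z₂ ∈ Set.Icc a b) (heq : f z₁ = f z₂) : m ∈ Set.Ioo z₁ z₂ := by
  constructor
  · by_contra! h
    exact (hdec ⟨h, h₁.2⟩ ⟨h.trans hz.le, h₂.2⟩ hz).ne heq.symm
  · by_contra! h
    exact (hinc ⟨h₁.1, hz.le.trans h⟩ ⟨h₂.1, h⟩ hz).ne heq

theorem apply_lt_of_mem_Ico_of_strictMonoOn (hinc : StrictMonoOn f (Set.Icc a m))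
    (hm : m ∈ Set.Ioo z₁ z₂) {y : α} (hy : y ∈ Set.Ico a z₁) : f y < f z₁ :=
  hinc ⟨hy.1, (hy.2.trans hm.1).le⟩ ⟨hy.1.trans hy.2.le, hm.1.le⟩ hy.2

theorem apply_lt_of_mem_Ioc_of_strictAntiOn (hdec : StrictAntiOn f (Set.Icc m b))
    (hm : m ∈ Set.Ioo z₁ z₂) {y : α} (hy : y ∈ Set.Ioc z₂ b) : f y < f z₂ :=
  hdec ⟨hm.2.le, hy.1.le.trans hy.2⟩ ⟨(hm.2.trans hy.1).le, hy.2⟩ hy.1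

theorem lt_apply_of_mem_Ioo_of_strictMonoOn_of_strictAntiOn
    (hinc : StrictMonoOn f (Set.Icc a m)) (hdec : StrictAntiOn f (Set.Icc m b))
    (h₁ : z₁ ∈ Set.Icc a b) (h₂ : z₂ ∈ Set.Icc a b) (heq : f z₁ = f z₂)
    (hm : m ∈ Set.Ioo z₁ z₂) {y : α} (hy : y ∈ Set.Ioo z₁ z₂) : f z₁ < f y := by
  rcases le_total y m with hym | hmy
  · exact hinc ⟨h₁.1, hm.1.le⟩ ⟨h₁.1.trans hy.1.le, hym⟩ hy.1
  · exact heq ▸ hdec ⟨hmy, hy.2.le.trans h₂.2⟩ ⟨hm.2.le, h₂.2⟩ hy.2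

end Unimodal

theorem encard_setOf_mem_Icc_and_eq_le_three {α β : Type*} [LinearOrder α] {f : α → β}
    {a b c d : α} (hab : Set.InjOn f (Set.Icc a b)) (hbc : Set.InjOn f (Set.Icc b c))
    (hcd : Set.InjOn f (Set.Icc c d)) (v : β) :
    {y | y ∈ Set.Icc a d ∧ f y = v}.encard ≤ 3 := by
  have hle : ∀ s, Set.InjOn f s → (s ∩ f ⁻¹' {v}).encard ≤ 1 := fun s hs =>
    Set.encard_le_one_iff.2 fun y z hy hz => hs hy.1 hz.1 (hy.2.trans hz.2.symm)
  have hcover : {y | y ∈ Set.Icc a d ∧ f y = v} ⊆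
      (Set.Icc a b ∩ f ⁻¹' {v}) ∪ (Set.Icc b c ∩ f ⁻¹' {v}) ∪ (Set.Icc c d ∩ f ⁻¹' {v}) := by
    rintro y ⟨⟨hay, hyd⟩, hy⟩
    rcases le_total y b with hyb | hby
    · exact Or.inl (Or.inl ⟨⟨hay, hyb⟩, hy⟩)
    rcases le_total y c with hyc | hcy
    · exact Or.inl (Or.inr ⟨⟨hby, hyc⟩, hy⟩)
    · exact Or.inr ⟨⟨hcy, hyd⟩, hy⟩
  calc _ ≤ _ := Set.encard_mono hcover
    _ ≤ (Set.Icc a b ∩ f ⁻¹' {v}).encard + (Set.Icc b c ∩ f ⁻¹' {v}).encard +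
          (Set.Icc c d ∩ f ⁻¹' {v}).encard :=
      (Set.encard_union_le _ _).trans (add_le_add_left (Set.encard_union_le _ _) _)
    _ ≤ 1 + 1 + 1 := add_le_add (add_le_add (hle _ hab) (hle _ hbc)) (hle _ hcd)
    _ = 3 := by norm_num

theorem hasDerivAt_F1 {r k : ℕ} (hk1 : 1 ≤ k) (hkr : k ≤ r) (α x y : ℝ) :
    HasDerivAt (F1 r k α x) (dg r k y - (2 + α)) y :=
  (((hasDerivAt_g hk1 hkr y).sub ((hasDerivAt_id y).const_mul (2 + α))).add_const _).congr_deriv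
    (by simp)

theorem strictAntiOn_F1 {r k : ℕ} (hk1 : 1 ≤ k) (hkr : k ≤ r) (α x : ℝ) {a b : ℝ}
    (h : ∀ y ∈ Set.Ioo a b, dg r k y < 2 + α) : StrictAntiOn (F1 r k α x) (Set.Icc a b) :=
  strictAntiOn_of_hasDerivWithinAt_neg (convex_Icc a b)
    (fun y _ => (hasDerivAt_F1 hk1 hkr α x y).continuousAt.continuousWithinAt)
    (fun y _ => (hasDerivAt_F1 hk1 hkr α x y).hasDerivWithinAt)
    fun y hy => sub_neg.2 (h y (by rwa [interior_Icc] at hy))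

theorem strictMonoOn_F1 {r k : ℕ} (hk1 : 1 ≤ k) (hkr : k ≤ r) (α x : ℝ) {a b : ℝ}
    (h : ∀ y ∈ Set.Ioo a b, 2 + α < dg r k y) : StrictMonoOn (F1 r k α x) (Set.Icc a b) :=
  strictMonoOn_of_hasDerivWithinAt_pos (convex_Icc a b)
    (fun y _ => (hasDerivAt_F1 hk1 hkr α x y).continuousAt.continuousWithinAt)
    (fun y _ => (hasDerivAt_F1 hk1 hkr α x y).hasDerivWithinAt)
    fun y hy => sub_pos.2 (h y (by rwa [interior_Icc] at hy))

theorem stmt_4_general (r k : ℕ) (hr : 2 ≤ r) (hk1 : 1 ≤ k) (hkr : k ≤ r)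
    (α : ℝ) (z₁ z₂ : ℝ) (hz : z₁ < z₂)
    (hsol : {y : ℝ | y ∈ Set.Ioo (0 : ℝ) 1 ∧ dg r k y = 2 + α} = {z₁, z₂})
    (x : ℝ) :
    StrictAntiOn (F1 r k α x) (Set.Icc 0 z₁) ∧
    StrictAntiOn (F1 r k α x) (Set.Icc z₂ 1) ∧
    StrictMonoOn (F1 r k α x) (Set.Icc z₁ z₂) ∧
    {y : ℝ | y ∈ Set.Icc (0 : ℝ) 1 ∧ F1 r k α x y = 0}.encard ≤ 3 := by
  have hz₁ : z₁ ∈ {y : ℝ | y ∈ Set.Ioo (0 : ℝ) 1 ∧ dg r k y = 2 + α} :=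
    hsol ▸ Set.mem_insert z₁ {z₂}
  have hz₂ : z₂ ∈ {y : ℝ | y ∈ Set.Ioo (0 : ℝ) 1 ∧ dg r k y = 2 + α} :=
    hsol ▸ Set.mem_insert_of_mem z₁ rfl
  have hinc := strictMonoOn_dg hk1 hkr
  have hdec := strictAntiOn_dg hr hk1 hkr
  have h₁ := Set.Ioo_subset_Icc_self hz₁.1
  have h₂ := Set.Ioo_subset_Icc_self hz₂.1
  have heq : dg r k z₁ = dg r k z₂ := hz₁.2.trans hz₂.2.symm
  have hm := mem_Ioo_of_strictMonoOn_of_strictAntiOn hinc hdec hz h₁ h₂ heq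
  have anti₁ : StrictAntiOn (F1 r k α x) (Set.Icc 0 z₁) := strictAntiOn_F1 hk1 hkr α x
    fun y hy => hz₁.2 ▸ apply_lt_of_mem_Ico_of_strictMonoOn hinc hm ⟨hy.1.le, hy.2⟩
  have anti₂ : StrictAntiOn (F1 r k α x) (Set.Icc z₂ 1) := strictAntiOn_F1 hk1 hkr α x
    fun y hy => hz₂.2 ▸ apply_lt_of_mem_Ioc_of_strictAntiOn hdec hm ⟨hy.1, hy.2.le⟩
  have mono : StrictMonoOn (F1 r k α x) (Set.Icc z₁ z₂) := strictMonoOn_F1 hk1 hkr α x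
    fun y hy =>
      hz₁.2 ▸ lt_apply_of_mem_Ioo_of_strictMonoOn_of_strictAntiOn hinc hdec h₁ h₂ heq hm hy
  exact ⟨anti₁, anti₂, mono,
    encard_setOf_mem_Icc_and_eq_le_three anti₁.injOn mono.injOn anti₂.injOn 0⟩

theorem stmt_4 (r k : ℕ) (hr : 2 ≤ r) (hk1 : 1 ≤ k) (hkr : k ≤ r)
    (α : ℝ) (hα : -1 < α) (z₁ z₂ : ℝ) (hz : z₁ < z₂)
    (hsol : {y : ℝ | y ∈ Set.Ioo (0 : ℝ) 1 ∧ dg r k y = 2 + α} = {z₁, z₂})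
    (x : ℝ) (hx : x ∈ Set.Icc (0 : ℝ) 1) :
    StrictAntiOn (F1 r k α x) (Set.Icc 0 z₁) ∧
    StrictAntiOn (F1 r k α x) (Set.Icc z₂ 1) ∧
    StrictMonoOn (F1 r k α x) (Set.Icc z₁ z₂) ∧
    {y : ℝ | y ∈ Set.Icc (0 : ℝ) 1 ∧ F1 r k α x y = 0}.encard ≤ 3 :=
  stmt_4_general r k hr hk1 hkr α z₁ z₂ hz hsol x
end

section
/- For all y ∈ [0,1], one has 21(y(1−y)⁵ + y⁵(1−y)) ≤ (35√10 − 98)/9, with equality if and only if y = 1/2 − (1/6)√(6√10 − 15) or y = 1/2 + (1/6)√(6√10 − 15). Consequently, for α > −1, the maximum over y ∈ [0,1] of q′(y) = 21(y(1−y)⁵ + y⁵(1−y)) − (2+α) is strictly positive if and only if α < (35√10 − 116)/9. -/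
/-!
In the variable `p = y (1 - y) ≤ 1/4` the quantity `y (1 - y)^5 + y^5 (1 - y)` is the cubic
`p (1 - 4p + 2p²)`, and with `M = (35√10 - 98)/9` one has the factorisation
`M - 21 p (1 - 4p + 2p²) = 42 (p - p₀)² ((2 + √10)/3 - p)`, `p₀ = (4 - √10)/6`.
The last factor is positive for `p ≤ 1/4`, so the maximum `M` is attained exactly where
`y (1 - y) = p₀`, i.e. at `y = 1/2 ± √(6√10 - 15)/6`, both in `[0, 1]`.
Hence `q'` takes a positive value on `[0, 1]` iff `2 + α < M`.
-/

open Real Set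

lemma mul_one_sub_le_quarter (y : ℝ) : y * (1 - y) ≤ 1 / 4 := by
  nlinarith [sq_nonneg (y - 1 / 2)]

lemma mem_Icc_of_mul_one_sub_nonneg {y : ℝ} (h : 0 ≤ y * (1 - y)) : y ∈ Icc (0 : ℝ) 1 := by
  constructor <;> nlinarith

lemma mul_one_sub_eq_quarter_sub_sq_iff {y s : ℝ} :
    y * (1 - y) = 1 / 4 - s ^ 2 ↔ y = 1 / 2 - s ∨ y = 1 / 2 + s := by
  have hfactor : y * (1 - y) - (1 / 4 - s ^ 2) = -((y - (1 / 2 - s)) * (y - (1 / 2 + s))) := by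
    ring
  rw [← sub_eq_zero, hfactor, neg_eq_zero, mul_eq_zero, sub_eq_zero, sub_eq_zero]

lemma mul_one_sub_pow_five_add (y : ℝ) :
    y * (1 - y) ^ 5 + y ^ 5 * (1 - y) =
      y * (1 - y) * (1 - 4 * (y * (1 - y)) + 2 * (y * (1 - y)) ^ 2) := by
  ring

lemma sqrt_ten_lt_four : √10 < 4 := by
  rw [sqrt_lt' (by norm_num)]
  norm_num

lemma three_lt_sqrt_ten : 3 < √10 := by
  rw [lt_sqrt (by norm_num)]
  norm_num

lemma cubic_max_sub_eq (p : ℝ) :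
    (35 * √10 - 98) / 9 - 21 * (p * (1 - 4 * p + 2 * p ^ 2)) =
      42 * (p - (4 - √10) / 6) ^ 2 * ((2 + √10) / 3 - p) := by
  linear_combination (7 / 3 - 7 / 2 * p - 7 / 18 * √10) * sq_sqrt (show (0 : ℝ) ≤ 10 by norm_num)

lemma cubic_le_max {p : ℝ} (hp : p ≤ 1 / 4) :
    21 * (p * (1 - 4 * p + 2 * p ^ 2)) ≤ (35 * √10 - 98) / 9 := by
  have hpos : 0 < (2 + √10) / 3 - p := by linarith [three_lt_sqrt_ten]
  rw [← sub_nonneg, cubic_max_sub_eq]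
  exact mul_nonneg (by positivity) hpos.le

lemma cubic_eq_max_iff {p : ℝ} (hp : p ≤ 1 / 4) :
    21 * (p * (1 - 4 * p + 2 * p ^ 2)) = (35 * √10 - 98) / 9 ↔ p = (4 - √10) / 6 := by
  have hpos : (2 + √10) / 3 - p ≠ 0 := by linarith [three_lt_sqrt_ten]
  rw [eq_comm, ← sub_eq_zero, cubic_max_sub_eq]
  simp [hpos, sub_eq_zero]

lemma quarter_sub_sq_root : 1 / 4 - (1 / 6 * √(6 * √10 - 15)) ^ 2 = (4 - √10) / 6 := by
  rw [mul_pow, sq_sqrt (by linarith [three_lt_sqrt_ten])]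
  ring

lemma symmetric_sum_le (y : ℝ) :
    21 * (y * (1 - y) ^ 5 + y ^ 5 * (1 - y)) ≤ (35 * √10 - 98) / 9 := by
  rw [mul_one_sub_pow_five_add]
  exact cubic_le_max (mul_one_sub_le_quarter y)

lemma symmetric_sum_eq_max_iff (y : ℝ) :
    21 * (y * (1 - y) ^ 5 + y ^ 5 * (1 - y)) = (35 * √10 - 98) / 9 ↔
      y = 1 / 2 - 1 / 6 * √(6 * √10 - 15) ∨ y = 1 / 2 + 1 / 6 * √(6 * √10 - 15) := by
  rw [mul_one_sub_pow_five_add, cubic_eq_max_iff (mul_one_sub_le_quarter y),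
    ← quarter_sub_sq_root, mul_one_sub_eq_quarter_sub_sq_iff]

theorem stmt_18 :
    (∀ y ∈ Set.Icc (0 : ℝ) 1,
      21 * (y * (1 - y) ^ 5 + y ^ 5 * (1 - y)) ≤ (35 * Real.sqrt 10 - 98) / 9 ∧
      (21 * (y * (1 - y) ^ 5 + y ^ 5 * (1 - y)) = (35 * Real.sqrt 10 - 98) / 9 ↔
        y = 1 / 2 - (1 / 6) * Real.sqrt (6 * Real.sqrt 10 - 15) ∨
        y = 1 / 2 + (1 / 6) * Real.sqrt (6 * Real.sqrt 10 - 15))) ∧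
    (∀ α : ℝ, -1 < α →
      ((∃ y ∈ Set.Icc (0 : ℝ) 1,
          0 < 21 * (y * (1 - y) ^ 5 + y ^ 5 * (1 - y)) - (2 + α)) ↔
        α < (35 * Real.sqrt 10 - 116) / 9)) := by
  refine ⟨fun y _ => ⟨symmetric_sum_le y, symmetric_sum_eq_max_iff y⟩, fun α _ => ⟨?_, ?_⟩⟩
  · rintro ⟨y, -, hy⟩
    linarith [symmetric_sum_le y]
  · intro hα
    set y₀ := 1 / 2 - 1 / 6 * √(6 * √10 - 15)
    have hmax := (symmetric_sum_eq_max_iff y₀).2 (Or.inl rfl)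
    have hp₀ : y₀ * (1 - y₀) = (4 - √10) / 6 := by
      rw [← quarter_sub_sq_root, mul_one_sub_eq_quarter_sub_sq_iff]
      exact Or.inl rfl
    have hy₀ : y₀ ∈ Icc (0 : ℝ) 1 :=
      mem_Icc_of_mul_one_sub_nonneg (by rw [hp₀]; linarith [sqrt_ten_lt_four])
    exact ⟨y₀, hy₀, by linarith⟩
end
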